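/- Let ℓ be a prime number, let n ≥ 1 be an integer, and let V be a 2n-dimensional vector space over F_ℓ = ℤ/ℓℤ with basis v_1, …, v_{2n}. Let S ⊆ Λ^n V be the span of ω = v_1 ∧ ⋯ ∧ v_n + v_{n+1} ∧ ⋯ ∧ v_{2n}, and let S^⊥ ⊆ Λ^n(V^∨) be the annihilator of S under the canonical pairing between Λ^n(V^∨) and Λ^n V. Then S^⊥ admits a basis all of whose elements are decomposable, i.e., a basis each of whose members has the form w_1 ∧ ⋯ ∧ w_n for some w_1, …, w_n ∈ V^∨. -/

import Mathlib

/-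
The annihilator is the kernel of `λ = B (·, ω)`. The wedges `e^*_g = e^*_{g 1} ∧ ⋯ ∧ e^*_{g n}`
of coordinate covectors span `⋀ⁿ V^∨`, and `λ (e^*_g) = 0` unless `g` is a permutation of
`(1, …, n)` or of `(n+1, …, 2n)`, in which case `e^*_g = ±α` resp. `±β` for the wedges `α`, `β`
of these, with `λ α = λ β = 1`. The decomposable covector
`(e^*_1 - e^*_{n+1}) ∧ (e^*_2 + e^*_{n+2}) ∧ ⋯ ∧ (e^*_n + e^*_{2n})` expands multilinearly to
`α - β` plus mixed wedges, which `λ` kills, so it lies in the kernel as well. Hence the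
decomposables in the kernel together with `α` span everything, and since `λ α = 1` the kernel
is spanned by its decomposable elements alone; a basis is extracted from these.
-/

/-- The wedge `f 0 ∧ ⋯ ∧ f (n-1)`, as an element of the `n`-th exterior power
`⋀[R]^n M ⊆ ExteriorAlgebra R M`. -/
noncomputable def wedge {R : Type*} [CommRing R] {M : Type*} [AddCommGroup M] [Module R M]
    (n : ℕ) (f : Fin n → M) : ↥(⋀[R]^n M) :=
  ⟨ExteriorAlgebra.ιMulti R n f, ExteriorAlgebra.ιMulti_range R n (Set.mem_range_self f)⟩

open Module Set Submodule LinearMap Function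

section Wedge

variable {R M : Type*} [CommRing R] [AddCommGroup M] [Module R M] {n : ℕ}

lemma wedge_eq_ιMulti (f : Fin n → M) : wedge n f = exteriorPower.ιMulti R n f := rfl

lemma wedge_comp_perm (f : Fin n → M) (σ : Equiv.Perm (Fin n)) :
    wedge n (f ∘ σ) = ((Equiv.Perm.sign σ : ℤ) : R) • wedge (R := R) n f := by
  rw [wedge_eq_ιMulti, AlternatingMap.map_perm, Units.smul_def, ← Int.cast_smul_eq_zsmul R]
  rfl

lemma wedge_add_univ (f g : Fin n → M) :
    wedge (R := R) n (f + g) = ∑ S : Finset (Fin n), wedge n (S.piecewise f g) :=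
  (exteriorPower.ιMulti R n).toMultilinearMap.map_add_univ f g

lemma wedge_smul_univ (c : Fin n → R) (f : Fin n → M) :
    wedge n (fun i => c i • f i) = (∏ i, c i) • wedge (R := R) n f :=
  (exteriorPower.ιMulti R n).toMultilinearMap.map_smul_univ c f

lemma span_range_wedge_basis {ι : Type*} (b : Basis ι R M) :
    span R (range fun g : Fin n → ι => wedge (R := R) n (b ∘ g)) = ⊤ := by
  rw [eq_top_iff, ← exteriorPower.ιMulti_span_of_span R n M b.span_eq]
  refine span_mono ?_
  rintro _ ⟨f, hf, rfl⟩
  choose g hg using fun i => hf (mem_range_self i)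
  exact ⟨g, congrArg (wedge n) (funext hg)⟩

end Wedge

lemma Module.Basis.coord_apply_self {ι R M : Type*} [Semiring R] [AddCommMonoid M] [Module R M]
    (b : Basis ι R M) (i : ι) : b.coord i (b i) = 1 := by
  simp [Basis.coord_apply]

lemma Module.Basis.coord_apply_of_ne {ι R M : Type*} [Semiring R] [AddCommMonoid M] [Module R M]
    (b : Basis ι R M) {i j : ι} (h : j ≠ i) : b.coord i (b j) = 0 := by
  classical
  simp [Basis.coord_apply, h]

lemma LinearMap.ker_eq_span_of_span_insert_eq_top {R M : Type*} [Semiring R] [AddCommMonoid M]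
    [Module R M] {f : M →ₗ[R] R} {T : Set M} (hT : T ⊆ ker f) {x : M} (hx : IsUnit (f x))
    (htop : span R (insert x T) = ⊤) : ker f = span R T := by
  refine le_antisymm (fun y hy => ?_) (span_le.2 hT)
  obtain ⟨a, z, hz, rfl⟩ := mem_span_insert.1 (htop ▸ mem_top : y ∈ span R (insert x T))
  have hfz : f z = 0 := span_le.2 hT hz
  rw [mem_ker, map_add, map_smul, hfz, add_zero, smul_eq_mul, hx.mul_left_eq_zero] at hy
  rwa [hy, zero_smul, zero_add]

lemma LinearMap.forall_mem_span_singleton_apply_eq_zero_iff {R M N P : Type*} [CommSemiring R]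
    [AddCommMonoid M] [Module R M] [AddCommMonoid N] [Module R N] [AddCommMonoid P] [Module R P]
    (B : M →ₗ[R] N →ₗ[R] P) (φ : M) (ω : N) :
    (∀ s ∈ span R {ω}, B φ s = 0) ↔ B φ ω = 0 := by
  refine ⟨fun h => h ω (mem_span_singleton_self ω), fun h s hs => ?_⟩
  obtain ⟨a, rfl⟩ := mem_span_singleton.1 hs
  rw [map_smul, h, smul_zero]

theorem exists_linearIndependent_fin_of_eq_span {K V : Type*} [DivisionRing K] [AddCommGroup V]
    [Module K V] [FiniteDimensional K V] {P : Submodule K V} {T : Set V} (hP : P = span K T) :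
    ∃ (m : ℕ) (v : Fin m → V), (∀ i, v i ∈ T) ∧ LinearIndependent K v ∧ span K (range v) = P := by
  obtain ⟨S, hST, hspan, hli⟩ := exists_linearIndependent K T
  obtain ⟨m, v, hv⟩ := hli.setFinite.fin_embedding
  refine ⟨m, v, fun i => hST (hv ▸ mem_range_self i), ?_, hv ▸ hspan.trans hP.symm⟩
  rw [← linearIndepOn_id_range_iff v.injective, hv]
  exact hli

def IsWedgePairing {R M : Type*} [CommRing R] [AddCommGroup M] [Module R M] {n : ℕ}
    (B : ⋀[R]^n (Dual R M) →ₗ[R] ⋀[R]^n M →ₗ[R] R) : Prop :=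
  ∀ (f : Fin n → Dual R M) (x : Fin n → M),
    B (wedge n f) (wedge n x) = ∑ σ : Equiv.Perm (Fin n),
      ((Equiv.Perm.sign σ : ℤ) : R) * ∏ i : Fin n, f i (x (σ i))

namespace IsWedgePairing

variable {R M ι : Type*} [CommRing R] [AddCommGroup M] [Module R M] {n : ℕ}
  {B : ⋀[R]^n (Dual R M) →ₗ[R] ⋀[R]^n M →ₗ[R] R} (hB : IsWedgePairing B) (b : Basis ι R M)
  {s t : Fin n → ι}

include hB

lemma apply_wedge_eq_zero {f : Fin n → Dual R M} {x : Fin n → M} (i : Fin n)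
    (hi : ∀ j, f i (x j) = 0) : B (wedge n f) (wedge n x) = 0 := by
  rw [hB]
  exact Finset.sum_eq_zero fun σ _ => by
    rw [Finset.prod_eq_zero (Finset.mem_univ i) (hi _), mul_zero]

lemma apply_wedge_coord_wedge_basis_eq_zero {g : Fin n → ι}
    (h : ∀ σ : Equiv.Perm (Fin n), g ≠ t ∘ σ) :
    B (wedge n (b.coord ∘ g)) (wedge n (b ∘ t)) = 0 := by
  rw [hB]
  refine Finset.sum_eq_zero fun σ _ => ?_
  obtain ⟨i, hi⟩ := Function.ne_iff.1 (h σ)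
  rw [Finset.prod_eq_zero (Finset.mem_univ i) (b.coord_apply_of_ne (Ne.symm hi)), mul_zero]

lemma apply_wedge_coord_wedge_basis_self (ht : Injective t) :
    B (wedge n (b.coord ∘ t)) (wedge n (b ∘ t)) = 1 := by
  rw [hB, Finset.sum_eq_single 1]
  · simp [b.coord_apply_self]
  · intro σ _ hσ
    obtain ⟨i, hi⟩ : ∃ i, σ i ≠ i := not_forall.1 fun h => hσ (Equiv.ext h)
    rw [Finset.prod_eq_zero (Finset.mem_univ i) (b.coord_apply_of_ne (ht.ne hi)), mul_zero]
  · simp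

lemma apply_wedge_coord_add_eq_one [NeZero n] (hs : Injective s)
    (hst : Disjoint (range s) (range t)) :
    B (wedge n (b.coord ∘ s)) (wedge n (b ∘ s) + wedge n (b ∘ t)) = 1 := by
  rw [map_add, hB.apply_wedge_coord_wedge_basis_self b hs,
    hB.apply_wedge_eq_zero 0 fun j => b.coord_apply_of_ne (Set.disjoint_range_iff.1 hst _ _).symm,
    add_zero]

lemma apply_wedge_piecewise_eq_zero (hst : Disjoint (range s) (range t))
    (c : Fin n → R) {S : Finset (Fin n)} (hS₀ : S ≠ ∅) (hS₁ : S ≠ Finset.univ) :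
    B (wedge n (S.piecewise (b.coord ∘ s) fun i => c i • b.coord (t i)))
      (wedge n (b ∘ s) + wedge n (b ∘ t)) = 0 := by
  obtain ⟨i, hi⟩ := Finset.nonempty_iff_ne_empty.2 hS₀
  obtain ⟨k, hk⟩ := not_forall.1 (mt Finset.eq_univ_iff_forall.2 hS₁)
  rw [map_add, hB.apply_wedge_eq_zero k fun j => ?_, hB.apply_wedge_eq_zero i fun j => ?_, add_zero]
  · rw [Finset.piecewise_eq_of_mem _ _ _ hi]
    exact b.coord_apply_of_ne (Set.disjoint_range_iff.1 hst i j).symm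
  · rw [Finset.piecewise_eq_of_notMem _ _ _ hk, LinearMap.smul_apply, comp_apply,
      b.coord_apply_of_ne (Set.disjoint_range_iff.1 hst j k), smul_zero]

lemma wedge_coord_mem_span_insert [NeZero n] (hs : Injective s)
    (ht : Injective t) (hst : Disjoint (range s) (range t)) :
    wedge n (b.coord ∘ t) ∈ span R (insert (wedge n (b.coord ∘ s))
      (range (wedge (R := R) n) ∩ ↑(ker (B.flip (wedge n (b ∘ s) + wedge n (b ∘ t)))))) := by
  set a : Fin n → Dual R M := b.coord ∘ s
  set a' : Fin n → Dual R M := fun i => (Pi.mulSingle 0 (-1) : Fin n → R) i • b.coord (t i)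
  have ha' : wedge n a' = -wedge (R := R) n (b.coord ∘ t) := by
    rw [wedge_smul_univ, Fintype.prod_pi_mulSingle']
    exact neg_one_smul R (wedge n (b.coord ∘ t))
  have hempty : (∅ : Finset (Fin n)) ≠ Finset.univ := Finset.univ_nonempty.ne_empty.symm
  have hsum : B (wedge n (a + a')) (wedge n (b ∘ s) + wedge n (b ∘ t)) = 0 := by
    rw [wedge_add_univ, map_sum, LinearMap.sum_apply,
      Fintype.sum_eq_add Finset.univ ∅ hempty.symm fun S hS =>
        hB.apply_wedge_piecewise_eq_zero b hst _ hS.2 hS.1,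
      Finset.piecewise_univ, Finset.piecewise_empty, ha', map_neg, LinearMap.neg_apply,
      hB.apply_wedge_coord_add_eq_one b hs hst, add_comm (wedge n (b ∘ s)),
      hB.apply_wedge_coord_add_eq_one b ht hst.symm, add_neg_cancel]
  have hexpand := wedge_add_univ (R := R) a a'
  rw [Fintype.sum_eq_add_sum_compl ∅, Finset.piecewise_empty, ha'] at hexpand
  rw [← neg_mem_iff, eq_sub_of_add_eq hexpand.symm]
  refine sub_mem (subset_span (mem_insert_of_mem _ ⟨⟨_, rfl⟩, hsum⟩)) (sum_mem fun S hS => ?_)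
  rw [Finset.mem_compl, Finset.mem_singleton] at hS
  by_cases hS₁ : S = Finset.univ
  · rw [hS₁, Finset.piecewise_univ]
    exact subset_span (mem_insert _ _)
  · exact subset_span (mem_insert_of_mem _
      ⟨⟨_, rfl⟩, hB.apply_wedge_piecewise_eq_zero b hst _ hS hS₁⟩)

theorem ker_flip_wedge_add_eq_span_decomposable [Finite ι] [NeZero n]
    (hs : Injective s) (ht : Injective t) (hst : Disjoint (range s) (range t)) :
    ker (B.flip (wedge n (b ∘ s) + wedge n (b ∘ t))) =
      span R (range (wedge (R := R) n) ∩ ↑(ker (B.flip (wedge n (b ∘ s) + wedge n (b ∘ t))))) := by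
  classical
  set P := span R (insert (wedge n (b.coord ∘ s))
    (range (wedge (R := R) n) ∩ ↑(ker (B.flip (wedge n (b ∘ s) + wedge n (b ∘ t))))))
  refine ker_eq_span_of_span_insert_eq_top inter_subset_right (x := wedge n (b.coord ∘ s)) ?_ ?_
  · rw [flip_apply, hB.apply_wedge_coord_add_eq_one b hs hst]
    exact isUnit_one
  rw [eq_top_iff, ← span_range_wedge_basis b.dualBasis, span_le]
  rintro _ ⟨g, rfl⟩
  rw [b.coe_dualBasis]
  have hperm {u : Fin n → ι} (hu : wedge n (b.coord ∘ u) ∈ P) (σ : Equiv.Perm (Fin n)) :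
      wedge n (b.coord ∘ (u ∘ σ)) ∈ P := by
    rw [← comp_assoc, wedge_comp_perm]
    exact smul_mem P _ hu
  by_cases hgs : ∃ σ : Equiv.Perm (Fin n), g = s ∘ σ
  · obtain ⟨σ, rfl⟩ := hgs
    exact hperm (subset_span (mem_insert _ _)) σ
  by_cases hgt : ∃ σ : Equiv.Perm (Fin n), g = t ∘ σ
  · obtain ⟨σ, rfl⟩ := hgt
    exact hperm (hB.wedge_coord_mem_span_insert b hs ht hst) σ
  push Not at hgs hgt
  refine subset_span (mem_insert_of_mem _ ⟨⟨_, rfl⟩, ?_⟩)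
  rw [SetLike.mem_coe, mem_ker, flip_apply, map_add,
    hB.apply_wedge_coord_wedge_basis_eq_zero b hgs, hB.apply_wedge_coord_wedge_basis_eq_zero b hgt,
    add_zero]

end IsWedgePairing

/-- Let `ℓ` be a prime, `n ≥ 1`, and let `V = (ZMod ℓ)^(2n)` with standard basis
`e i = Pi.single i 1`.  Let `B` be the canonical pairing `Λⁿ(V^∨) × Λⁿ V → ZMod ℓ`,
determined by `⟨f₁ ∧ ⋯ ∧ fₙ, x₁ ∧ ⋯ ∧ xₙ⟩ = ∑_{σ} sgn(σ) f₁(x_{σ(1)}) ⋯ fₙ(x_{σ(n)})`.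
Let `S ⊆ Λⁿ V` be the span of `ω = e 0 ∧ ⋯ ∧ e (n-1) + e n ∧ ⋯ ∧ e (2n-1)`.  Then the
annihilator `S^⊥ ⊆ Λⁿ(V^∨)` admits a basis consisting of decomposable elements, i.e. a
linearly independent family spanning `S^⊥` each of whose members has the form
`w₁ ∧ ⋯ ∧ wₙ` with `w₁, …, wₙ ∈ V^∨`. -/
theorem annihilator_has_decomposable_basis (ℓ : ℕ) (hℓ : ℓ.Prime) (n : ℕ) (hn : 1 ≤ n)
    (B : ↥(⋀[ZMod ℓ]^n (Module.Dual (ZMod ℓ) (Fin (2 * n) → ZMod ℓ)))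
        →ₗ[ZMod ℓ] ↥(⋀[ZMod ℓ]^n (Fin (2 * n) → ZMod ℓ)) →ₗ[ZMod ℓ] ZMod ℓ)
    (hB : ∀ (f : Fin n → Module.Dual (ZMod ℓ) (Fin (2 * n) → ZMod ℓ))
        (x : Fin n → (Fin (2 * n) → ZMod ℓ)),
        B (wedge n f) (wedge n x)
          = ∑ σ : Equiv.Perm (Fin n),
              ((Equiv.Perm.sign σ : ℤ) : ZMod ℓ) * ∏ i : Fin n, f i (x (σ i))) :
    ∀ ω : ↥(⋀[ZMod ℓ]^n (Fin (2 * n) → ZMod ℓ)),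
    ω = wedge n (fun i : Fin n => Pi.single (⟨(i : ℕ), by omega⟩ : Fin (2 * n)) 1) +
        wedge n (fun i : Fin n => Pi.single (⟨n + (i : ℕ), by omega⟩ : Fin (2 * n)) 1) →
    ∃ (m : ℕ) (b : Fin m → ↥(⋀[ZMod ℓ]^n (Module.Dual (ZMod ℓ) (Fin (2 * n) → ZMod ℓ)))),
      (∀ i : Fin m, ∃ w : Fin n → Module.Dual (ZMod ℓ) (Fin (2 * n) → ZMod ℓ),
        b i = wedge n w) ∧
      LinearIndependent (ZMod ℓ) b ∧
      ↑(Submodule.span (ZMod ℓ) (Set.range b))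
        = {φ : ↥(⋀[ZMod ℓ]^n (Module.Dual (ZMod ℓ) (Fin (2 * n) → ZMod ℓ))) |
            ∀ s ∈ Submodule.span (ZMod ℓ) ({ω} : Set _), B φ s = 0} := by
  intro ω hω
  have : Fact ℓ.Prime := ⟨hℓ⟩
  have : NeZero n := ⟨by omega⟩
  let low : Fin n → Fin (2 * n) := fun i => ⟨i, by omega⟩
  let high : Fin n → Fin (2 * n) := fun i => ⟨n + i, by omega⟩
  have hker : ker (B.flip ω) = span (ZMod ℓ) (range (wedge n) ∩ ↑(ker (B.flip ω))) := by
    have hω' : ω = wedge n (Pi.basisFun _ _ ∘ low) + wedge n (Pi.basisFun _ _ ∘ high) := by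
      simp only [hω, comp_def, Pi.basisFun_apply, low, high]
    rw [hω']
    refine IsWedgePairing.ker_flip_wedge_add_eq_span_decomposable hB _ ?_ ?_ ?_
    · exact fun i j h => Fin.ext (by simpa [low] using congrArg Fin.val h)
    · exact fun i j h => Fin.ext (by simpa [high] using congrArg Fin.val h)
    · exact Set.disjoint_range_iff.2 fun i j h => by
        have := congrArg Fin.val h
        simp only [low, high] at this
        omega
  obtain ⟨m, v, hvT, hli, hspan⟩ := exists_linearIndependent_fin_of_eq_span hker
  refine ⟨m, v, fun i => (hvT i).1.imp fun _ hw => hw.symm, hli, ?_⟩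
  rw [hspan]
  ext φ
  exact (forall_mem_span_singleton_apply_eq_zero_iff B φ ω).symm
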